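/- Given x^i ∈ ℝ^N, the surrogate F(x | x^i) = Σ_n Σ_l w̄_n w̄_l [cos(q(x_n^i,x_l^i)) − sin(q(x_n^i,x_l^i))·φ((x_n−x_l)−(x_n^i−x_l^i)) + ½φ²((x_n−x_l)−(x_n^i−x_l^i))²], where q(a,b)=φ(a−b)−(ψ_n−ψ_l), satisfies F(x | x^i) ≥ F(x) for all x ∈ ℝ^N and F(x^i | x^i) = F(x^i), where F(x) = Σ_n Σ_l w̄_n w̄_l cos(φ(x_n−x_l)−(ψ_n−ψ_l)). -/

import Mathlib

open Finset

lemma cos_quad_upper (a d : ℝ) :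
    Real.cos (a + d) ≤ Real.cos a - Real.sin a * d + (1/2) * d^2 := by
  set f : ℝ → ℝ := fun t => Real.cos a - Real.sin a * t + (1/2) * t^2 - Real.cos (a + t) with hf
  set g : ℝ → ℝ := fun t => -Real.sin a + t + Real.sin (a + t) with hg
  have hfd : ∀ t : ℝ, HasDerivAt f (g t) t := by
    intro t
    have h1 : HasDerivAt (fun t : ℝ => Real.cos (a + t)) (-Real.sin (a + t)) t := by
      have := (Real.hasDerivAt_cos (a + t)).comp t ((hasDerivAt_id t).const_add a)
      simpa [Function.comp_def] using this
    have h2 : HasDerivAt (fun t : ℝ => Real.cos a - Real.sin a * t + (1/2) * t^2)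
        (-Real.sin a + t) t := by
      have := (((hasDerivAt_id t).const_mul (Real.sin a)).const_sub (Real.cos a)).add
        (((hasDerivAt_pow 2 t)).const_mul (1/2 : ℝ))
      convert this using 1
      · ext x; simp
      · rfl
      · funext x; simp only [Pi.add_apply, id]
      · norm_num; ring
    have h3 := h2.sub h1
    have h4 : g t = -Real.sin a + t - -Real.sin (a + t) := by
      simp only [hg]; ring
    rw [h4]
    exact h3
  have hgd : ∀ t : ℝ, HasDerivAt g (1 + Real.cos (a + t)) t := by
    intro t
    have h1 : HasDerivAt (fun t : ℝ => Real.sin (a + t)) (Real.cos (a + t)) t := by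
      have := (Real.hasDerivAt_sin (a + t)).comp t ((hasDerivAt_id t).const_add a)
      simpa [Function.comp_def] using this
    have := ((hasDerivAt_id t).const_add (-Real.sin a)).add h1
    simpa [hg, Pi.add_def] using this
  have hgmono : Monotone g := by
    apply monotone_of_deriv_nonneg
    · exact fun t => (hgd t).differentiableAt
    · intro t
      rw [(hgd t).deriv]
      have := Real.neg_one_le_cos (a + t)
      linarith
  have hg0 : g 0 = 0 := by simp [hg]
  have hf0 : f 0 = 0 := by simp [hf]
  have key : 0 ≤ f d := by
    rcases le_total 0 d with hd | hd
    · have hmono : MonotoneOn f (Set.Ici (0:ℝ)) := by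
        apply monotoneOn_of_deriv_nonneg (convex_Ici 0)
          (Continuous.continuousOn (by
            continuity))
        · intro t _; exact (hfd t).differentiableAt.differentiableWithinAt
        · intro t ht
          rw [(hfd t).deriv]
          have : (0:ℝ) ≤ t := le_of_lt (by simpa using ht)
          calc (0:ℝ) = g 0 := hg0.symm
            _ ≤ g t := hgmono this
      have := hmono (Set.self_mem_Ici) (Set.mem_Ici.mpr hd) hd
      linarith [hf0 ▸ this]
    · have hmono : AntitoneOn f (Set.Iic (0:ℝ)) := by
        apply antitoneOn_of_deriv_nonpos (convex_Iic 0)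
          (Continuous.continuousOn (by continuity))
        · intro t _; exact (hfd t).differentiableAt.differentiableWithinAt
        · intro t ht
          rw [(hfd t).deriv]
          have : t ≤ 0 := le_of_lt (by simpa using ht)
          calc g t ≤ g 0 := hgmono this
            _ = 0 := hg0
      have := hmono (Set.mem_Iic.mpr hd) (Set.self_mem_Iic) hd
      linarith [hf0 ▸ this]
  simpa [hf] using key

theorem stmt19 (N : ℕ) (w : Fin N → ℝ) (hw : ∀ n, 0 ≤ w n) (ψ : Fin N → ℝ) (φ : ℝ)
    (xi : Fin N → ℝ)
    (F : (Fin N → ℝ) → ℝ)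
    (hF : F = fun x => ∑ n, ∑ l, w n * w l * Real.cos (φ * (x n - x l) - (ψ n - ψ l)))
    (Fs : (Fin N → ℝ) → ℝ)
    (hFs : Fs = fun x => ∑ n, ∑ l, w n * w l *
        (Real.cos (φ * (xi n - xi l) - (ψ n - ψ l))
          - Real.sin (φ * (xi n - xi l) - (ψ n - ψ l)) * (φ * ((x n - x l) - (xi n - xi l)))
          + (1/2) * (φ * ((x n - x l) - (xi n - xi l)))^2)) :
    (∀ x : Fin N → ℝ, F x ≤ Fs x) ∧ Fs xi = F xi := by
  subst hF hFs
  constructor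
  · intro x
    apply Finset.sum_le_sum
    intro n _
    apply Finset.sum_le_sum
    intro l _
    apply mul_le_mul_of_nonneg_left _ (mul_nonneg (hw n) (hw l))
    have key := cos_quad_upper (φ * (xi n - xi l) - (ψ n - ψ l))
      (φ * ((x n - x l) - (xi n - xi l)))
    have harg : φ * (xi n - xi l) - (ψ n - ψ l) + φ * ((x n - x l) - (xi n - xi l))
        = φ * (x n - x l) - (ψ n - ψ l) := by ring
    rw [harg] at key
    linarith
  · simp
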